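/- arXiv:2202.06564 — 3 statements merged into one kernel-verified Lean document; each statement's English description precedes it below -/
import Mathlib

section
/- Let P, L, N be positive integers with N ≤ min(P, L), and let α₁ ≥ α₂ ≥ … ≥ α_N ≥ 0 be real numbers. Let μ_P denote the product of P copies of the standard exponential distribution on (0,∞)^P and μ_L the product of L copies on (0,∞)^L; for x ∈ (0,∞)^P let x_(1) ≤ x_(2) ≤ … ≤ x_(P) denote the nondecreasing rearrangement of the coordinates of x, and similarly for y ∈ (0,∞)^L. Then ∑_{i=1}^N ∫_{(0,∞)^P} ∫_{(0,∞)^L} log₂(1 + α_i · x_(i) · y_(i)) dμ_L(y) dμ_P(x) ≤ ∑_{i=1}^N log₂(1 + α_i · (∑_{j=1}^i 1/(P−j+1)) · (∑_{j=1}^i 1/(L−j+1))). -/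
/-!
By concavity of `t ↦ log₂ (1 + c t)`, Jensen's inequality, applied first in `y` and then in `x`,
bounds the `i`-th summand by `log₂ (1 + αᵢ 𝔼[x₍ᵢ₎] 𝔼[y₍ᵢ₎])`, so it remains to compute the mean of
an exponential order statistic. By the layer-cake formula `𝔼[x₍ⱼ₊₁₎] = ∫₀^∞ ℙ(x₍ⱼ₊₁₎ > t) dt`, and
`x₍ⱼ₊₁₎ > t` says that at most `j` coordinates lie below `t`, a binomial event of probability
`∑_{k ≤ j} C(n,k) (1 - e^{-t})^k e^{-(n-k)t}`. The `k`-th term integrates to the Beta value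
`C(n,k) k! (n-k-1)! / n! = 1 / (n - k)`.
-/

open Real MeasureTheory ProbabilityTheory

/-- The `i`-th ascending order statistic of the tuple `x`: the `i`-th smallest coordinate. -/
noncomputable def orderStat {n : ℕ} (x : Fin n → ℝ) (i : Fin n) : ℝ :=
  x (Tuple.sort x i)

open Set Finset
open scoped Nat

section Jensen

variable {b c : ℝ}

lemma concaveOn_logb_one_add_mul (hb : 1 < b) (hc : 0 ≤ c) :
    ConcaveOn ℝ (Ici 0) fun t => logb b (1 + c * t) := by
  let g : ℝ →ᵃ[ℝ] ℝ := AffineMap.const ℝ ℝ 1 + c • AffineMap.id ℝ ℝ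
  have hg : ∀ t, g t = 1 + c * t := fun t => rfl
  have hlog := (strictConcaveOn_log_Ioi.concaveOn.comp_affineMap g).smul
    (inv_nonneg.2 (log_pos hb).le)
  refine (hlog.subset (fun t (ht : 0 ≤ t) => ?_) (convex_Ici 0)).congr fun t _ => ?_
  · simp only [Set.mem_preimage, hg, Set.mem_Ioi]
    positivity
  · simp [hg, logb, div_eq_inv_mul]

lemma continuousOn_logb_one_add_mul (hc : 0 ≤ c) :
    ContinuousOn (fun t => logb b (1 + c * t)) (Ici 0) :=
  ContinuousOn.logb (by fun_prop) fun t (ht : 0 ≤ t) => by positivity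

lemma logb_one_add_le (hb : 1 < b) {u : ℝ} (hu : 0 ≤ u) : logb b (1 + u) ≤ u / log b := by
  rw [logb, div_le_div_iff_of_pos_right (log_pos hb)]
  linarith [log_le_sub_one_of_pos (by linarith : 0 < 1 + u)]

variable {Ω : Type*} [MeasurableSpace Ω] {μ : Measure Ω} {f : Ω → ℝ}

lemma integrable_logb_one_add_mul (hb : 1 < b) (hc : 0 ≤ c) (hf : Integrable f μ)
    (hf0 : 0 ≤ᵐ[μ] f) : Integrable (fun ω => logb b (1 + c * f ω)) μ := by
  refine (hf.const_mul (c / log b)).mono'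
    ((measurable_log.comp_aemeasurable ((hf.aemeasurable.const_mul c).const_add 1)).div_const
      (log b)).aestronglyMeasurable ?_
  filter_upwards [hf0] with ω hω
  have hu : 0 ≤ c * f ω := mul_nonneg hc hω
  rw [norm_of_nonneg (logb_nonneg hb (by linarith)), mul_comm_div, ← mul_div_assoc]
  exact logb_one_add_le hb hu

lemma integral_logb_one_add_mul_le [IsProbabilityMeasure μ] (hb : 1 < b) (hc : 0 ≤ c)
    (hf : Integrable f μ) (hf0 : 0 ≤ᵐ[μ] f) :
    ∫ ω, logb b (1 + c * f ω) ∂μ ≤ logb b (1 + c * ∫ ω, f ω ∂μ) :=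
  (concaveOn_logb_one_add_mul hb hc).le_map_integral (continuousOn_logb_one_add_mul hc)
    isClosed_Ici hf0 hf (integrable_logb_one_add_mul hb hc hf hf0)

lemma integral_integral_logb_one_add_mul_mul_le {Ω' : Type*} [MeasurableSpace Ω']
    {ν : Measure Ω'} [IsProbabilityMeasure μ] [IsProbabilityMeasure ν] {g : Ω' → ℝ}
    (hb : 1 < b) (hc : 0 ≤ c) (hf : Integrable f μ) (hf0 : 0 ≤ᵐ[μ] f)
    (hg : Integrable g ν) (hg0 : 0 ≤ᵐ[ν] g) :
    ∫ x, ∫ y, logb b (1 + c * f x * g y) ∂ν ∂μ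
      ≤ logb b (1 + c * (∫ x, f x ∂μ) * ∫ y, g y ∂ν) := by
  have hcg : 0 ≤ c * ∫ y, g y ∂ν := mul_nonneg hc (integral_nonneg_of_ae hg0)
  calc ∫ x, ∫ y, logb b (1 + c * f x * g y) ∂ν ∂μ
      ≤ ∫ x, logb b (1 + (c * ∫ y, g y ∂ν) * f x) ∂μ := by
        refine integral_mono_of_nonneg ?_ (integrable_logb_one_add_mul hb hcg hf hf0) ?_
        · filter_upwards [hf0] with x hx
          refine integral_nonneg_of_ae ?_
          filter_upwards [hg0] with y hy
          exact logb_nonneg hb (by nlinarith [mul_nonneg (mul_nonneg hc hx) hy])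
        · filter_upwards [hf0] with x hx
          rw [mul_right_comm]
          exact integral_logb_one_add_mul_le hb (mul_nonneg hc hx) hg hg0
    _ ≤ logb b (1 + c * (∫ x, f x ∂μ) * ∫ y, g y ∂ν) := by
        rw [mul_right_comm c]
        exact integral_logb_one_add_mul_le hb hcg hf hf0

end Jensen

lemma Finset.sum_filter_card_le_eq_sum_choose {α M : Type*} [Fintype α] [AddCommMonoid M]
    (f : ℕ → M) {j : ℕ} (hj : j ≤ Fintype.card α) :
    ∑ S ∈ ({S | #S ≤ j} : Finset (Finset α)), f #S
      = ∑ k ∈ range (j + 1), (Fintype.card α).choose k • f k := by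
  rw [sum_filter, ← powerset_univ, sum_powerset_apply_card (fun k => if k ≤ j then f k else 0),
    card_univ]
  simp_rw [smul_ite, smul_zero]
  rw [← sum_filter]
  congr 1
  ext k
  simp only [mem_filter, mem_range]
  omega

section OrderStatistics

variable {n : ℕ}

lemma orderStat_le_iff (x : Fin n → ℝ) (j : Fin n) (t : ℝ) :
    orderStat x j ≤ t ↔ (j : ℕ) < #{i | x i ≤ t} := by
  rw [orderStat, ← Function.comp_apply (f := x),
    ← Tuple.lt_card_le_iff_apply_le_of_monotone (Tuple.monotone_sort x), ← Fintype.card_subtype,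
    ← Fintype.card_subtype]
  exact iff_of_eq (congrArg _ (Fintype.card_congr (.subtypeEquiv (Tuple.sort x) fun _ => .rfl)))

lemma lt_orderStat_iff (x : Fin n → ℝ) (j : Fin n) (t : ℝ) :
    t < orderStat x j ↔ #{i | x i ≤ t} ≤ j := by
  rw [← not_le, orderStat_le_iff, not_lt]

def levelCell (t : ℝ) (S : Finset (Fin n)) : Set (Fin n → ℝ) :=
  univ.pi fun i => if i ∈ S then Iic t else Ioi t

lemma mem_levelCell_iff {t : ℝ} {S : Finset (Fin n)} {x : Fin n → ℝ} :
    x ∈ levelCell t S ↔ ({i | x i ≤ t} : Finset (Fin n)) = S := by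
  simp only [levelCell, mem_univ_pi, Finset.ext_iff, Finset.mem_filter, Finset.mem_univ, true_and]
  refine forall_congr' fun i => ?_
  split_ifs with hi <;> simp [hi]

lemma measurableSet_levelCell (t : ℝ) (S : Finset (Fin n)) : MeasurableSet (levelCell t S) :=
  .univ_pi fun i => by split_ifs <;> measurability

lemma setOf_lt_orderStat_eq_biUnion (j : Fin n) (t : ℝ) :
    {x | t < orderStat x j} = ⋃ S ∈ ({S | #S ≤ j} : Finset (Finset (Fin n))), levelCell t S := by
  ext x
  simp [lt_orderStat_iff, mem_levelCell_iff]

lemma measurable_orderStat (j : Fin n) : Measurable fun x : Fin n → ℝ => orderStat x j :=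
  measurable_of_Ioi fun t => by
    change MeasurableSet {x | t < orderStat x j}
    rw [setOf_lt_orderStat_eq_biUnion]
    exact .biUnion (Finset.countable_toSet _) fun S _ => measurableSet_levelCell t S

lemma measure_pi_levelCell (ν : Measure ℝ) [SigmaFinite ν] (t : ℝ) (S : Finset (Fin n)) :
    Measure.pi (fun _ => ν) (levelCell t S) = ν (Iic t) ^ #S * ν (Ioi t) ^ (n - #S) := by
  rw [levelCell, Measure.pi_pi]
  simp_rw [apply_ite ν]
  rw [prod_ite, prod_const, prod_const, filter_not, filter_mem_eq_of_subset (subset_univ S),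
    ← Finset.compl_eq_univ_sdiff, card_compl, Fintype.card_fin]

lemma pairwiseDisjoint_levelCell (t : ℝ) (s : Set (Finset (Fin n))) :
    s.PairwiseDisjoint (levelCell t) := fun _ _ _ _ hST =>
  Set.disjoint_left.2 fun _ hS hT =>
    hST ((mem_levelCell_iff.1 hS).symm.trans (mem_levelCell_iff.1 hT))

lemma measure_pi_lt_orderStat (ν : Measure ℝ) [SigmaFinite ν] (j : Fin n) (t : ℝ) :
    Measure.pi (fun _ => ν) {x | t < orderStat x j}
      = ∑ k ∈ range (j + 1), n.choose k * (ν (Iic t) ^ k * ν (Ioi t) ^ (n - k)) := by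
  rw [setOf_lt_orderStat_eq_biUnion, measure_biUnion_finset (pairwiseDisjoint_levelCell t _)
    fun S _ => measurableSet_levelCell t S]
  simp_rw [measure_pi_levelCell]
  rw [sum_filter_card_le_eq_sum_choose (fun k => ν (Iic t) ^ k * ν (Ioi t) ^ (n - k))
    (by simp [j.is_lt.le]), Fintype.card_fin]
  simp_rw [nsmul_eq_mul]

end OrderStatistics

lemma integrableOn_one_sub_exp_neg_pow_mul_exp_neg_pow (k m : ℕ) :
    IntegrableOn (fun t => (1 - exp (-t)) ^ k * exp (-t) ^ (m + 1)) (Ioi 0) := by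
  refine (exp_neg_integrableOn_Ioi 0 one_pos).mono' (by fun_prop) ?_
  filter_upwards [ae_restrict_mem measurableSet_Ioi] with t (ht : 0 < t)
  have he : exp (-t) ≤ 1 := exp_le_one_iff.2 (by linarith)
  have h1 : 0 ≤ 1 - exp (-t) := by linarith
  rw [norm_of_nonneg (by positivity), neg_one_mul]
  calc (1 - exp (-t)) ^ k * exp (-t) ^ (m + 1) ≤ 1 * exp (-t) := by
        gcongr
        · exact pow_le_one₀ h1 (by linarith [exp_pos (-t)])
        · exact pow_le_of_le_one (exp_pos _).le he (by omega)
    _ = exp (-t) := one_mul _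

lemma integral_one_sub_exp_neg_pow_mul_exp_neg_pow (k m : ℕ) :
    ∫ t in Ioi 0, (1 - exp (-t)) ^ k * exp (-t) ^ (m + 1) = k ! * m ! / (k + m + 1)! := by
  induction k generalizing m with
  | zero =>
    have h : ∀ t : ℝ, exp (-t) ^ (m + 1) = exp (-(m + 1 : ℝ) * t) := fun t => by
      rw [← exp_nat_mul]; push_cast; ring_nf
    have hm : (0 : ℝ) < m + 1 := by positivity
    simp_rw [pow_zero, one_mul, h]
    rw [integral_exp_mul_Ioi (by linarith) 0, Nat.zero_add, Nat.factorial_succ]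
    push_cast
    field_simp
    simp
  | succ k ih =>
    have h : ∀ t : ℝ, (1 - exp (-t)) ^ (k + 1) * exp (-t) ^ (m + 1)
        = (1 - exp (-t)) ^ k * exp (-t) ^ (m + 1) - (1 - exp (-t)) ^ k * exp (-t) ^ (m + 1 + 1) :=
      fun t => by ring
    simp_rw [h]
    rw [integral_sub (integrableOn_one_sub_exp_neg_pow_mul_exp_neg_pow k m)
      (integrableOn_one_sub_exp_neg_pow_mul_exp_neg_pow k (m + 1)), ih, ih,
      show k + (m + 1) + 1 = (k + m + 1) + 1 by ring, show k + 1 + m + 1 = (k + m + 1) + 1 by ring]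
    push_cast [Nat.factorial_succ]
    field_simp
    ring

lemma cast_choose_mul_factorial_mul_factorial_div_factorial {k m : ℕ} :
    ((k + m + 1).choose k : ℝ) * (k ! * m ! / (k + m + 1)!) = 1 / (m + 1) := by
  have h : ((k + m + 1).choose k : ℝ) * k ! * (m + 1)! = (k + m + 1)! := by
    have := Nat.choose_mul_factorial_mul_factorial (n := k + m + 1) (k := k) (by omega)
    rw [show k + m + 1 - k = m + 1 by omega] at this
    exact_mod_cast this
  push_cast [Nat.factorial_succ] at h ⊢
  field_simp
  linear_combination h

section Exponential

instance : IsProbabilityMeasure (expMeasure 1) := isProbabilityMeasure_expMeasure one_pos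

lemma expMeasure_one_Iic {t : ℝ} (ht : 0 ≤ t) :
    expMeasure 1 (Iic t) = ENNReal.ofReal (1 - exp (-t)) := by
  rw [← ofReal_cdf, cdf_expMeasure_eq one_pos, if_pos ht, one_mul]

lemma expMeasure_one_Ioi {t : ℝ} (ht : 0 ≤ t) :
    expMeasure 1 (Ioi t) = ENNReal.ofReal (exp (-t)) := by
  have h1 : 0 ≤ 1 - exp (-t) := sub_nonneg.2 (exp_le_one_iff.2 (neg_nonpos.2 ht))
  rw [← compl_Iic, prob_compl_eq_one_sub measurableSet_Iic, expMeasure_one_Iic ht,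
    ← ENNReal.ofReal_one, ← ENNReal.ofReal_sub _ h1, sub_sub_cancel]

lemma ae_nonneg_expMeasure_one : ∀ᵐ t ∂expMeasure 1, 0 ≤ t := by
  refine ae_iff.2 (measure_mono_null (t := Iic 0) (fun t (ht : ¬ 0 ≤ t) => (not_le.1 ht).le) ?_)
  rw [expMeasure_one_Iic le_rfl, neg_zero, exp_zero, sub_self, ENNReal.ofReal_zero]

lemma ae_nonneg_pi_expMeasure_one {ι : Type*} [Fintype ι] :
    ∀ᵐ x ∂Measure.pi fun _ : ι => expMeasure 1, ∀ i, 0 ≤ x i :=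
  ae_all_iff.2 fun i =>
    (measurePreserving_eval _ i).quasiMeasurePreserving.ae ae_nonneg_expMeasure_one

variable {n : ℕ}

lemma measure_pi_expMeasure_one_lt_orderStat (j : Fin n) {t : ℝ} (ht : 0 ≤ t) :
    Measure.pi (fun _ => expMeasure 1) {x | t < orderStat x j} = ENNReal.ofReal
      (∑ k ∈ range (j + 1), n.choose k * ((1 - exp (-t)) ^ k * exp (-t) ^ (n - k))) := by
  have h1 : 0 ≤ 1 - exp (-t) := sub_nonneg.2 (exp_le_one_iff.2 (neg_nonpos.2 ht))
  rw [measure_pi_lt_orderStat, expMeasure_one_Iic ht, expMeasure_one_Ioi ht,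
    ENNReal.ofReal_sum_of_nonneg fun k _ => by positivity]
  simp_rw [ENNReal.ofReal_mul (Nat.cast_nonneg _), ENNReal.ofReal_mul (pow_nonneg h1 _),
    ENNReal.ofReal_pow h1, ENNReal.ofReal_pow (exp_pos _).le, ENNReal.ofReal_natCast]

lemma choose_mul_integral_one_sub_exp_neg_pow_mul_exp_neg_pow {k : ℕ} (hk : k < n) :
    n.choose k * ∫ t in Ioi 0, (1 - exp (-t)) ^ k * exp (-t) ^ (n - k) = 1 / ((n : ℝ) - k) := by
  obtain ⟨m, rfl⟩ : ∃ m, n = k + m + 1 := ⟨n - k - 1, by omega⟩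
  rw [show k + m + 1 - k = m + 1 by omega, integral_one_sub_exp_neg_pow_mul_exp_neg_pow,
    cast_choose_mul_factorial_mul_factorial_div_factorial]
  push_cast
  ring_nf

lemma ae_nonneg_orderStat_expMeasure_one (j : Fin n) :
    0 ≤ᵐ[Measure.pi fun _ => expMeasure 1] fun x => orderStat x j :=
  ae_nonneg_pi_expMeasure_one.mono fun _ hx => hx _

lemma lintegral_orderStat_expMeasure_one (j : Fin n) :
    ∫⁻ x, ENNReal.ofReal (orderStat x j) ∂Measure.pi (fun _ => expMeasure 1)
      = ENNReal.ofReal (∑ k ∈ range (j + 1), 1 / ((n : ℝ) - k)) := by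
  have hk : ∀ k ∈ range (j + 1), k < n := fun k hk => (mem_range_succ_iff.1 hk).trans_lt j.2
  have hint : ∀ k ∈ range (j + 1),
      IntegrableOn (fun t => (1 - exp (-t)) ^ k * exp (-t) ^ (n - k)) (Ioi 0) := fun k hk' => by
    rw [show n - k = n - k - 1 + 1 by have := hk k hk'; omega]
    exact integrableOn_one_sub_exp_neg_pow_mul_exp_neg_pow k _
  have hsum := integrable_finsetSum _ fun k hk' => (hint k hk').const_mul (n.choose k : ℝ)
  rw [lintegral_eq_lintegral_meas_lt _ (ae_nonneg_orderStat_expMeasure_one j)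
      (measurable_orderStat j).aemeasurable,
    setLIntegral_congr_fun measurableSet_Ioi
      fun t ht => measure_pi_expMeasure_one_lt_orderStat j (le_of_lt ht),
    ← ofReal_integral_eq_lintegral_ofReal hsum ?_,
    integral_finsetSum _ fun k hk' => (hint k hk').const_mul _]
  · congr 1
    refine sum_congr rfl fun k hk' => ?_
    rw [integral_const_mul, choose_mul_integral_one_sub_exp_neg_pow_mul_exp_neg_pow (hk k hk')]
  · filter_upwards [ae_restrict_mem measurableSet_Ioi] with t (ht : 0 < t)
    have h1 : 0 ≤ 1 - exp (-t) := sub_nonneg.2 (exp_le_one_iff.2 (by linarith))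
    exact sum_nonneg fun k _ => by positivity

lemma integrable_orderStat_expMeasure_one (j : Fin n) :
    Integrable (fun x => orderStat x j) (Measure.pi fun _ => expMeasure 1) :=
  ⟨(measurable_orderStat j).aestronglyMeasurable,
    (hasFiniteIntegral_iff_ofReal (ae_nonneg_orderStat_expMeasure_one j)).2
      (lintegral_orderStat_expMeasure_one j ▸ ENNReal.ofReal_lt_top)⟩

lemma integral_orderStat_expMeasure_one (j : Fin n) :
    ∫ x, orderStat x j ∂Measure.pi (fun _ => expMeasure 1)
      = ∑ k ∈ range (j + 1), 1 / ((n : ℝ) - k) := by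
  rw [integral_eq_lintegral_of_nonneg_ae (ae_nonneg_orderStat_expMeasure_one j)
    (measurable_orderStat j).aestronglyMeasurable, lintegral_orderStat_expMeasure_one,
    ENNReal.toReal_ofReal]
  refine sum_nonneg fun k hk => ?_
  have : (k : ℝ) < n := by exact_mod_cast (mem_range_succ_iff.1 hk).trans_lt j.2
  exact one_div_nonneg.2 (sub_nonneg.2 this.le)

end Exponential

theorem ergodic_capacity_ordered_jensen_bound_general (P L N : ℕ) (hNmin : N ≤ min P L)
    (α : Fin N → ℝ) (hα0 : ∀ i, 0 ≤ α i) :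
    ∑ i : Fin N,
        ∫ x, ∫ y, Real.logb 2
            (1 + α i * orderStat x (Fin.castLE (hNmin.trans (min_le_left P L)) i)
                     * orderStat y (Fin.castLE (hNmin.trans (min_le_right P L)) i))
          ∂(Measure.pi fun _ : Fin L => expMeasure 1)
          ∂(Measure.pi fun _ : Fin P => expMeasure 1)
      ≤ ∑ i : Fin N, Real.logb 2
          (1 + α i * (∑ j ∈ Finset.range (i.1 + 1), 1 / ((P : ℝ) - j))
                   * (∑ j ∈ Finset.range (i.1 + 1), 1 / ((L : ℝ) - j))) := by
  refine sum_le_sum fun i _ => ?_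
  set jP := Fin.castLE (hNmin.trans (min_le_left P L)) i
  set jL := Fin.castLE (hNmin.trans (min_le_right P L)) i
  have hmeanP : ∫ x, orderStat x jP ∂Measure.pi (fun _ => expMeasure 1)
      = ∑ j ∈ range (i.1 + 1), 1 / ((P : ℝ) - j) := integral_orderStat_expMeasure_one jP
  have hmeanL : ∫ y, orderStat y jL ∂Measure.pi (fun _ => expMeasure 1)
      = ∑ j ∈ range (i.1 + 1), 1 / ((L : ℝ) - j) := integral_orderStat_expMeasure_one jL
  rw [← hmeanP, ← hmeanL]
  exact integral_integral_logb_one_add_mul_mul_le one_lt_two (hα0 i)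
    (integrable_orderStat_expMeasure_one jP) (ae_nonneg_orderStat_expMeasure_one jP)
    (integrable_orderStat_expMeasure_one jL) (ae_nonneg_orderStat_expMeasure_one jL)

/-- **Proposition 4 of the paper (refined Jensen upper bound `C_Jen2`).** Pairing the
nonincreasing coefficients `αᵢ` with the ascending order statistics of i.i.d. standard
exponential vectors of lengths `P` and `L`. -/
theorem ergodic_capacity_ordered_jensen_bound (P L N : ℕ)
    (hP : 0 < P) (hL : 0 < L) (hN : 0 < N) (hNmin : N ≤ min P L)
    (α : Fin N → ℝ) (hα0 : ∀ i, 0 ≤ α i) (hα : Antitone α) :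
    ∑ i : Fin N,
        ∫ x, ∫ y, Real.logb 2
            (1 + α i * orderStat x (Fin.castLE (hNmin.trans (min_le_left P L)) i)
                     * orderStat y (Fin.castLE (hNmin.trans (min_le_right P L)) i))
          ∂(Measure.pi fun _ : Fin L => expMeasure 1)
          ∂(Measure.pi fun _ : Fin P => expMeasure 1)
      ≤ ∑ i : Fin N, Real.logb 2
          (1 + α i * (∑ j ∈ Finset.range (i.1 + 1), 1 / ((P : ℝ) - j))
                   * (∑ j ∈ Finset.range (i.1 + 1), 1 / ((L : ℝ) - j))) :=
  ergodic_capacity_ordered_jensen_bound_general P L N hNmin α hα0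
end

section
/- Let n ≥ 1 and let a₁, …, a_n and b₁, …, b_n be nonnegative real numbers with 0 ≤ a₁ ≤ a₂ ≤ … ≤ a_n and 0 ≤ b₁ ≤ b₂ ≤ … ≤ b_n, and let θ be any permutation of {1, 2, …, n}. Then ∏_{k=1}^n (1 + a_k b_{n−k+1}) ≤ ∏_{k=1}^n (1 + a_k b_{θ(k)}) ≤ ∏_{k=1}^n (1 + a_k b_k). -/
/-!
The product `∏ (1 + aₖ b_{θ(k)})` is a product of a kernel `φ x y = 1 + x y` which is
multiplicatively supermodular: for `x ≤ x'` and `y ≤ y'`,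
`(1 + x' y)(1 + x y') ≤ (1 + x y)(1 + x' y')`, which is the binary rearrangement inequality
`x' y + x y' ≤ x y + x' y'`. As in the classical proof of the rearrangement inequality, composing
a permutation with a transposition that creates a new fixed point at the largest index therefore
never decreases the product, and induction on the set of moved points gives the upper bound.
The lower bound is the upper bound for the order dual of the second variable and of the values.
-/

open Equiv Equiv.Perm Finset OrderDual NNReal

/-- The multiplicative form of supermodularity (log-supermodularity for positive values). -/
def MulSupermodular {α β M : Type*} [Preorder α] [Preorder β] [Mul M] [LE M]
    (φ : α → β → M) : Prop :=
  ∀ ⦃x x'⦄, x ≤ x' → ∀ ⦃y y'⦄, y ≤ y' → φ x' y * φ x y' ≤ φ x y * φ x' y'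

theorem MulSupermodular.dual_right {α β M : Type*} [Preorder α] [Preorder β] [CommMagma M]
    [LE M] {φ : α → β → M} (hφ : MulSupermodular φ) :
    MulSupermodular fun x (y : βᵒᵈ) ↦ toDual (φ x (ofDual y)) := fun x x' hx y y' hy ↦
  show φ x (ofDual y) * φ x' (ofDual y') ≤ φ x' (ofDual y) * φ x (ofDual y') from
    (mul_comm _ _).trans_le ((hφ hx hy).trans_eq (mul_comm _ _))

theorem mulSupermodular_one_add_mul {R : Type*} [CommSemiring R] [PartialOrder R]
    [IsStrictOrderedRing R] [ExistsAddOfLE R] : MulSupermodular fun x y : R ↦ 1 + x * y :=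
  fun x x' hx y y' hy ↦
    calc (1 + x' * y) * (1 + x * y') = 1 + (x * y' + x' * y) + x * x' * (y * y') := by ring
      _ ≤ 1 + (x * y + x' * y') + x * x' * (y * y') := by
        grw [mul_add_mul_le_mul_add_mul hx hy]
      _ = (1 + x * y) * (1 + x' * y') := by ring

theorem Equiv.Perm.set_support_trans_swap_subset {ι : Type*} [DecidableEq ι] {σ : Perm ι}
    {a : ι} {s : Finset ι} (hσ : {x | σ x ≠ x} ⊆ (insert a s : Finset ι)) :
    {x | σ.trans (swap a (σ a)) x ≠ x} ⊆ s := by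
  intro x hx
  simp only [Ne, Set.mem_ofPred_eq, coe_trans, Function.comp_apply, swap_apply_def] at hx
  split_ifs at hx with h₁ h₂
  · obtain rfl | hax := eq_or_ne x a
    · contradiction
    · exact mem_of_mem_insert_of_ne (hσ fun h ↦ hax <| h.symm.trans h₁) hax
  · exact (hx <| σ.injective h₂.symm).elim
  · exact mem_of_mem_insert_of_ne (hσ hx) (ne_of_apply_ne _ h₂)

section Rearrangement

variable {ι α β M : Type*} [LinearOrder α] [LinearOrder β] [CommMonoid M] [PartialOrder M]
  [IsOrderedMonoid M] {φ : α → β → M} {s : Finset ι} {σ : Perm ι} {f : ι → α} {g : ι → β}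

theorem MonovaryOn.prod_comp_perm_le_prod (hφ : MulSupermodular φ) (hfg : MonovaryOn f g s)
    (hσ : {x | σ x ≠ x} ⊆ s) : ∏ i ∈ s, φ (f i) (g (σ i)) ≤ ∏ i ∈ s, φ (f i) (g i) := by
  classical
  induction s using induction_on_max_value fun i ↦ toLex (g i, f i) generalizing σ with
  | empty => simp only [le_rfl, Finset.prod_empty]
  | insert a s has hamax hind => ?_
  specialize hind (hfg.subset <| subset_insert _ _) (set_support_trans_swap_subset hσ)
  simp_rw [prod_insert has]
  grw [← hind]
  obtain hσa | hσa := eq_or_ne a (σ a)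
  · rw [← hσa, swap_self, trans_refl]
  have h1s : σ.symm a ∈ s := by
    rw [Ne, ← inv_eq_iff_eq] at hσa
    refine mem_of_mem_insert_of_ne (hσ fun h ↦ hσa ?_) hσa
    rwa [apply_symm_apply, eq_comm] at h
  have hf : f (σ.symm a) ≤ f a := by
    obtain h | h := Prod.Lex.toLex_le_toLex.1 (hamax (σ.symm a) h1s)
    · exact hfg (mem_insert_of_mem h1s) (mem_insert_self _ _) h
    · exact h.2
  have hg : g (σ a) ≤ g a := by
    obtain h | h := Prod.Lex.toLex_le_toLex.1
      (hamax (σ a) (mem_of_mem_insert_of_ne (hσ <| σ.injective.ne hσa.symm) hσa.symm))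
    · exact h.le
    · exact h.1.le
  -- Only the factors at `σ⁻¹ a` and at `a` differ between the two sides.
  simp only [← s.prod_erase_mul _ h1s, mul_comm]
  rw [← mul_assoc, ← mul_assoc]
  simp only [swap_apply_left, Function.comp_apply, Equiv.coe_trans, apply_symm_apply]
  refine mul_le_mul' ((hφ hf hg).trans_eq (mul_comm _ _)) (prod_congr rfl fun x hx ↦ ?_).le
  rw [mem_erase, Ne, eq_symm_apply] at hx
  rw [swap_apply_of_ne_of_ne hx.1 (σ.injective.ne _)]
  rintro rfl
  exact has hx.2

theorem AntivaryOn.prod_le_prod_comp_perm (hφ : MulSupermodular φ) (hfg : AntivaryOn f g s)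
    (hσ : {x | σ x ≠ x} ⊆ s) : ∏ i ∈ s, φ (f i) (g i) ≤ ∏ i ∈ s, φ (f i) (g (σ i)) :=
  hfg.dual_right.prod_comp_perm_le_prod hφ.dual_right hσ

end Rearrangement

theorem prod_one_add_mul_rearrangement_general (n : ℕ)
    (a b : Fin n → ℝ) (ha0 : ∀ k, 0 ≤ a k) (hb0 : ∀ k, 0 ≤ b k)
    (ha : Monotone a) (hb : Monotone b) (θ : Equiv.Perm (Fin n)) :
    ∏ k, (1 + a k * b k.rev) ≤ ∏ k, (1 + a k * b (θ k)) ∧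
    ∏ k, (1 + a k * b (θ k)) ≤ ∏ k, (1 + a k * b k) := by
  lift a to Fin n → ℝ≥0 using ha0
  lift b to Fin n → ℝ≥0 using hb0
  replace ha : Monotone a := fun i j h ↦ ha h
  replace hb : Monotone b := fun i j h ↦ hb h
  have hrev : Antitone fun k : Fin n ↦ b k.rev := hb.comp_antitone fun _ _ ↦ Fin.rev_le_rev.2
  have lower := ((ha.antivary hrev).antivaryOn (univ : Finset (Fin n))).prod_le_prod_comp_perm
    mulSupermodular_one_add_mul (σ := θ.trans Fin.revPerm) (by simp)
  have upper := ((ha.monovary hb).monovaryOn (univ : Finset (Fin n))).prod_comp_perm_le_prod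
    mulSupermodular_one_add_mul (σ := θ) (by simp)
  simp only [coe_trans, Function.comp_apply, Fin.revPerm_apply, Fin.rev_rev] at lower
  beta_reduce
  exact ⟨mod_cast lower, mod_cast upper⟩

/-- **Multiplicative rearrangement inequality (Section III-B of the paper).** For similarly
ordered nonnegative sequences `a` and `b` and any permutation `θ`, the oppositely ordered
pairing minimizes and the similarly ordered pairing maximizes `∏ (1 + aₖ b_{θ(k)})`.
Here `Fin.rev k` plays the role of the index `n - k + 1`. -/
theorem prod_one_add_mul_rearrangement (n : ℕ) (hn : 1 ≤ n)
    (a b : Fin n → ℝ) (ha0 : ∀ k, 0 ≤ a k) (hb0 : ∀ k, 0 ≤ b k)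
    (ha : Monotone a) (hb : Monotone b) (θ : Equiv.Perm (Fin n)) :
    ∏ k, (1 + a k * b k.rev) ≤ ∏ k, (1 + a k * b (θ k)) ∧
    ∏ k, (1 + a k * b (θ k)) ≤ ∏ k, (1 + a k * b k) :=
  prod_one_add_mul_rearrangement_general n a b ha0 hb0 ha hb θ
end

section
/- Let N_u, N_b, L, P be positive integers. Let A_u ∈ ℂ^{N_u×L}, X ∈ ℂ^{L×P}, A_b ∈ ℂ^{N_b×P}, let T = diag(t) with t ∈ ℂ^L, let G = diag(g) with g ∈ ℂ^P, and let Q ∈ ℂ^{N_b×N_b} be Hermitian positive semidefinite. Define H = A_u T X G A_bᴴ ∈ ℂ^{N_u×N_b}. Then for every integer k with 1 ≤ k ≤ min(N_u, L, P), ∏_{i=1}^k λ_i(H Q Hᴴ) ≤ ∏_{i=1}^k λ_i(A_uᴴ A_u) · λ_i(A_bᴴ Q A_b) · λ_i(Xᴴ X) · λ_i(Gᴴ G) · λ_i(Tᴴ T). -/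
open Matrix Finset

open scoped ComplexOrder

/-- The eigenvalues of a Hermitian matrix arranged in nonincreasing order:
`eigDesc hA 0 ≥ eigDesc hA 1 ≥ …`. -/
noncomputable def eigDesc {n : ℕ} {A : Matrix (Fin n) (Fin n) ℂ} (hA : A.IsHermitian) :
    Fin n → ℝ :=
  fun i => hA.eigenvalues (Tuple.sort hA.eigenvalues i.rev)

/-! Write `Λ_k(M)` (`topEigProd`) for the product of the `k` largest eigenvalues of a positive
semidefinite `M`. By Cauchy–Binet, `det (Cᴴ M C) ≤ Λ_k(M) det (Cᴴ C)` for every `n × k` matrix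
`C`, with equality when the columns of `C` are orthonormal eigenvectors for the `k` largest
eigenvalues. Evaluating `B M Bᴴ` on such a frame `W` and taking `C = Bᴴ W` gives
`Λ_k(B M Bᴴ) ≤ Λ_k(M) Λ_k(B Bᴴ)`; the same `C` for `M = Bᴴ B` gives
`Λ_k(B Bᴴ)² ≤ Λ_k(Bᴴ B) Λ_k(B Bᴴ)`, hence `Λ_k(B Bᴴ) ≤ Λ_k(Bᴴ B)`. Peeling `A_u`, `T`, `X`, `G`
off `H Q Hᴴ = A_u (T X G (A_bᴴ Q A_b) Gᴴ Xᴴ Tᴴ) A_uᴴ` one factor at a time gives the theorem. -/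

theorem StrictMono.castLE_le {k n : ℕ} {s : Fin k → Fin n} (hs : StrictMono s) (hk : k ≤ n)
    (i : Fin k) : Fin.castLE hk i ≤ s i := by
  obtain ⟨i, hi⟩ := i
  induction i with
  | zero => exact Nat.zero_le _
  | succ m ih =>
    have hlt : s ⟨m, by omega⟩ < s ⟨m + 1, hi⟩ := hs (Fin.mk_lt_mk.mpr m.lt_succ_self)
    have := ih (by omega)
    simp only [Fin.le_def, Fin.lt_def, Fin.val_castLE] at *
    omega

theorem Tuple.sort_comp_perm_of_strictMono {k n : ℕ} {s : Fin k → Fin n} (hs : StrictMono s)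
    (σ : Equiv.Perm (Fin k)) :
    Tuple.sort (s ∘ σ) = σ⁻¹ := by
  refine (Tuple.eq_sort_iff.mpr ⟨?_, fun i j hij hsij => ?_⟩).symm
  · simpa [Function.comp_def] using hs.monotone
  · exact absurd (by simpa [hs.injective.eq_iff] using hsij) hij.ne

open Classical in
theorem sum_injective_eq_sum_strictMono_sum_perm {k n : ℕ} {M : Type*} [AddCommMonoid M]
    (f : (Fin k → Fin n) → M) :
    ∑ p with Function.Injective p, f p =
      ∑ s with StrictMono s, ∑ σ : Equiv.Perm (Fin k), f (s ∘ σ) := by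
  rw [← Finset.sum_product']
  refine Finset.sum_nbij' (fun p => (p ∘ Tuple.sort p, (Tuple.sort p)⁻¹)) (fun x => x.1 ∘ x.2)
    ?_ ?_ ?_ ?_ ?_
  · intro p hp
    simp only [Finset.mem_filter, Finset.mem_univ, true_and] at hp
    simp only [Finset.mem_product, Finset.mem_filter, Finset.mem_univ, true_and, and_true]
    exact (Tuple.monotone_sort p).strictMono_of_injective (hp.comp (Tuple.sort p).injective)
  · rintro ⟨s, σ⟩ hx
    simp only [Finset.mem_product, Finset.mem_filter, Finset.mem_univ, true_and, and_true] at hx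
    simpa using hx.injective.comp σ.injective
  · intro p _
    ext i
    simp
  · rintro ⟨s, σ⟩ hx
    simp only [Finset.mem_product, Finset.mem_filter, Finset.mem_univ, true_and, and_true] at hx
    simp [Tuple.sort_comp_perm_of_strictMono hx, Function.comp_assoc]
  · intro p _
    simp [Function.comp_assoc]

namespace Matrix

open Equiv

variable {R : Type*} [CommRing R] {k n : ℕ}

theorem det_mul_eq_sum_det_submatrix_mul_prod (A : Matrix (Fin k) (Fin n) R)
    (B : Matrix (Fin n) (Fin k) R) :
    det (A * B) = ∑ p : Fin k → Fin n, det (A.submatrix id p) * ∏ i, B (p i) i := by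
  simp only [det_apply', mul_apply, Finset.prod_univ_sum, Fintype.piFinset_univ, Finset.mul_sum,
    Finset.sum_mul, Finset.prod_mul_distrib, submatrix_apply, id_eq, mul_assoc]
  exact Finset.sum_comm

open Classical in
theorem det_mul_eq_sum_det_submatrix_mul_det_submatrix (A : Matrix (Fin k) (Fin n) R)
    (B : Matrix (Fin n) (Fin k) R) :
    det (A * B) = ∑ s with StrictMono s, det (A.submatrix id s) * det (B.submatrix s id) := by
  have repeated_column_vanishes : ∀ p ∈ Finset.univ.filter (¬ Function.Injective ·),
      det (A.submatrix id p) * ∏ i, B (p i) i = 0 := by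
    intro p hp
    obtain ⟨i, j, hpij, hij⟩ := Function.not_injective_iff.mp (Finset.mem_filter.mp hp).2
    rw [det_zero_of_column_eq hij fun l => by simp [hpij], zero_mul]
  rw [det_mul_eq_sum_det_submatrix_mul_prod, ← Finset.sum_filter_add_sum_filter_not _
    Function.Injective, Finset.sum_eq_zero repeated_column_vanishes, add_zero,
    sum_injective_eq_sum_strictMono_sum_perm]
  refine Finset.sum_congr rfl fun s _ => ?_
  calc ∑ σ : Perm (Fin k), det (A.submatrix id (s ∘ σ)) * ∏ i, B ((s ∘ σ) i) i
      = ∑ σ : Perm (Fin k), det (A.submatrix id s) *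
          (Perm.sign σ * ∏ i, B.submatrix s id (σ i) i) := by
        refine Finset.sum_congr rfl fun σ _ => ?_
        rw [show A.submatrix id (s ∘ σ) = (A.submatrix id s).submatrix id σ from rfl,
          det_permute']
        simp only [Function.comp_apply, submatrix_apply, id_eq]
        ring
    _ = det (A.submatrix id s) * det (B.submatrix s id) := by
        rw [← Finset.mul_sum, ← det_apply']

open Classical in
theorem det_conjTranspose_mul_diagonal_mul (d : Fin n → ℝ) (V : Matrix (Fin n) (Fin k) ℂ) :
    det (Vᴴ * diagonal (fun i => (d i : ℂ)) * V) =
      ((∑ s with StrictMono s, (∏ i, d (s i)) * Complex.normSq (det (V.submatrix s id)) : ℝ) :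
        ℂ) := by
  rw [det_mul_eq_sum_det_submatrix_mul_det_submatrix]
  push_cast
  refine Finset.sum_congr rfl fun s _ => ?_
  have hsub : (Vᴴ * diagonal (fun i => (d i : ℂ))).submatrix id s
      = (V.submatrix s id)ᴴ * diagonal (fun j => (d (s j) : ℂ)) := by
    ext i j
    simp [mul_diagonal]
  rw [hsub, det_mul, det_conjTranspose, det_diagonal, Complex.normSq_eq_conj_mul_self]
  simp only [Complex.star_def]
  ring

theorem det_conjTranspose_mul_diagonal_mul_le (hk : k ≤ n) {d : Fin n → ℝ}
    (hd : Antitone d) (hd0 : ∀ i, 0 ≤ d i) (V : Matrix (Fin n) (Fin k) ℂ) :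
    det (Vᴴ * diagonal (fun i => (d i : ℂ)) * V) ≤
      (∏ i : Fin k, d (Fin.castLE hk i) : ℝ) * det (Vᴴ * V) := by
  classical
  have gram := det_conjTranspose_mul_diagonal_mul (fun _ => 1) V
  simp only [Complex.ofReal_one, diagonal_one, Matrix.mul_one, Finset.prod_const_one,
    one_mul] at gram
  rw [det_conjTranspose_mul_diagonal_mul, gram, ← Complex.ofReal_mul, Complex.real_le_real,
    Finset.mul_sum]
  refine Finset.sum_le_sum fun s hs => mul_le_mul_of_nonneg_right ?_ (Complex.normSq_nonneg _)
  exact Finset.prod_le_prod (fun i _ => hd0 _)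
    fun i _ => hd ((Finset.mem_filter.mp hs).2.castLE_le hk i)

end Matrix

section Spectrum

variable {n : ℕ} {A : Matrix (Fin n) (Fin n) ℂ}

theorem eigDesc_antitone (hA : A.IsHermitian) : Antitone (eigDesc hA) :=
  fun _ _ hij => Tuple.monotone_sort hA.eigenvalues (Fin.rev_le_rev.mpr hij)

theorem Matrix.PosSemidef.eigDesc_nonneg (hA : A.PosSemidef) (i : Fin n) :
    0 ≤ eigDesc hA.isHermitian i :=
  hA.eigenvalues_nonneg _

theorem Matrix.IsHermitian.exists_unitary_eq_mul_diagonal_eigDesc (hA : A.IsHermitian) :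
    ∃ U : Matrix (Fin n) (Fin n) ℂ, Uᴴ * U = 1 ∧ U * Uᴴ = 1 ∧
      A = U * diagonal (fun i => (eigDesc hA i : ℂ)) * Uᴴ := by
  set τ : Equiv.Perm (Fin n) := Fin.revPerm.trans (Tuple.sort hA.eigenvalues)
  set U₀ : Matrix (Fin n) (Fin n) ℂ := ↑hA.eigenvectorUnitary
  have hU₀ : U₀ ∈ unitaryGroup (Fin n) ℂ := hA.eigenvectorUnitary.2
  refine ⟨U₀.submatrix id τ, ?_, ?_, ?_⟩
  · rw [conjTranspose_submatrix, ← submatrix_mul _ _ _ _ _ Function.bijective_id,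
      ← star_eq_conjTranspose, mem_unitaryGroup_iff'.mp hU₀, submatrix_one_equiv]
  · rw [conjTranspose_submatrix, submatrix_mul_equiv, ← star_eq_conjTranspose,
      mem_unitaryGroup_iff.mp hU₀, submatrix_id_id]
  · have hD : diagonal (fun i => (eigDesc hA i : ℂ)) =
        (diagonal (RCLike.ofReal ∘ hA.eigenvalues)).submatrix τ τ := by
      rw [submatrix_diagonal_equiv]
      rfl
    rw [hD, conjTranspose_submatrix, submatrix_mul_equiv, submatrix_mul_equiv, submatrix_id_id,
      ← star_eq_conjTranspose]
    exact hA.spectral_theorem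

end Spectrum

noncomputable def topEigProd {n : ℕ} {A : Matrix (Fin n) (Fin n) ℂ} (hA : A.IsHermitian)
    (k : ℕ) (hk : k ≤ n) : ℝ :=
  ∏ i : Fin k, eigDesc hA (Fin.castLE hk i)

section TopEigProd

variable {k n : ℕ} {A : Matrix (Fin n) (Fin n) ℂ}

theorem topEigProd_congr {B : Matrix (Fin n) (Fin n) ℂ} (h : A = B) (hA : A.IsHermitian)
    (hB : B.IsHermitian) (hk : k ≤ n) : topEigProd hA k hk = topEigProd hB k hk := by
  subst h
  rfl

theorem Matrix.PosSemidef.topEigProd_nonneg (hA : A.PosSemidef) (hk : k ≤ n) :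
    0 ≤ topEigProd hA.isHermitian k hk :=
  Finset.prod_nonneg fun _ _ => hA.eigDesc_nonneg _

theorem Matrix.PosSemidef.det_conjTranspose_mul_mul_le (hA : A.PosSemidef) (hk : k ≤ n)
    (C : Matrix (Fin n) (Fin k) ℂ) :
    det (Cᴴ * A * C) ≤ topEigProd hA.isHermitian k hk * det (Cᴴ * C) := by
  obtain ⟨U, -, hUU, hAU⟩ := hA.isHermitian.exists_unitary_eq_mul_diagonal_eigDesc
  have hCAC : Cᴴ * A * C = (Uᴴ * C)ᴴ * diagonal (fun i => (eigDesc hA.isHermitian i : ℂ)) *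
      (Uᴴ * C) := by
    conv_lhs => rw [hAU]
    simp only [conjTranspose_mul, conjTranspose_conjTranspose, Matrix.mul_assoc]
  have hCC : Cᴴ * C = (Uᴴ * C)ᴴ * (Uᴴ * C) := by
    rw [conjTranspose_mul, conjTranspose_conjTranspose, Matrix.mul_assoc, ← Matrix.mul_assoc U,
      hUU, Matrix.one_mul]
  rw [hCAC, hCC]
  exact det_conjTranspose_mul_diagonal_mul_le hk (eigDesc_antitone _) hA.eigDesc_nonneg _

theorem Matrix.IsHermitian.exists_isometry_mul_eq_mul_diagonal (hA : A.IsHermitian)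
    (hk : k ≤ n) :
    ∃ W : Matrix (Fin n) (Fin k) ℂ, Wᴴ * W = 1 ∧
      A * W = W * diagonal (fun i => (eigDesc hA (Fin.castLE hk i) : ℂ)) := by
  obtain ⟨U, hUU, -, hAU⟩ := hA.exists_unitary_eq_mul_diagonal_eigDesc
  refine ⟨U.submatrix id (Fin.castLE hk), ?_, ?_⟩
  · rw [conjTranspose_submatrix, ← submatrix_mul _ _ _ _ _ Function.bijective_id, hUU,
      submatrix_one _ (Fin.castLE_injective hk)]
  · have hAU' : A * U = U * diagonal (fun i => (eigDesc hA i : ℂ)) := by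
      conv_lhs => rw [hAU, Matrix.mul_assoc, Matrix.mul_assoc, hUU, Matrix.mul_one]
    conv_lhs => rw [← submatrix_id_id A, ← submatrix_mul _ _ _ _ _ Function.bijective_id, hAU']
    ext i j
    simp [mul_diagonal]

theorem Matrix.IsHermitian.exists_isometry_det_eq_topEigProd (hA : A.IsHermitian)
    (hk : k ≤ n) :
    ∃ W : Matrix (Fin n) (Fin k) ℂ, Wᴴ * W = 1 ∧ det (Wᴴ * A * W) = topEigProd hA k hk := by
  obtain ⟨W, hWW, hAW⟩ := hA.exists_isometry_mul_eq_mul_diagonal hk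
  refine ⟨W, hWW, ?_⟩
  rw [Matrix.mul_assoc, hAW, ← Matrix.mul_assoc, hWW, Matrix.one_mul, det_diagonal, topEigProd,
    Complex.ofReal_prod]

end TopEigProd

section Submultiplicativity

variable {k m n : ℕ}

theorem topEigProd_self_mul_conjTranspose_le (B : Matrix (Fin m) (Fin n) ℂ) (hkm : k ≤ m)
    (hkn : k ≤ n) :
    topEigProd (posSemidef_self_mul_conjTranspose B).isHermitian k hkm ≤
      topEigProd (posSemidef_conjTranspose_mul_self B).isHermitian k hkn := by
  set a := topEigProd (posSemidef_self_mul_conjTranspose B).isHermitian k hkm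
  set b := topEigProd (posSemidef_conjTranspose_mul_self B).isHermitian k hkn
  obtain ⟨W, hWW, hBW⟩ :=
    (posSemidef_self_mul_conjTranspose B).isHermitian.exists_isometry_mul_eq_mul_diagonal hkm
  set D := diagonal fun i =>
    (eigDesc (posSemidef_self_mul_conjTranspose B).isHermitian (Fin.castLE hkm i) : ℂ)
  have hWD : Wᴴ * (B * Bᴴ) * W = D := by
    rw [Matrix.mul_assoc, hBW, ← Matrix.mul_assoc, hWW, Matrix.one_mul]
  have hgram : (Bᴴ * W)ᴴ * (Bᴴ * W) = D := by
    rw [← hWD]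
    simp only [conjTranspose_mul, conjTranspose_conjTranspose, Matrix.mul_assoc]
  have hquad : (Bᴴ * W)ᴴ * (Bᴴ * B) * (Bᴴ * W) = D * D := by
    calc (Bᴴ * W)ᴴ * (Bᴴ * B) * (Bᴴ * W) = Wᴴ * (B * Bᴴ) * (B * Bᴴ * W) := by
          simp only [conjTranspose_mul, conjTranspose_conjTranspose, Matrix.mul_assoc]
      _ = D * D := by rw [hBW, ← Matrix.mul_assoc, hWD]
  have hdetD : det D = a := by
    simp only [D, a, det_diagonal, topEigProd, Complex.ofReal_prod]
  have key : a * a ≤ b * a := by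
    have h := (posSemidef_conjTranspose_mul_self B).det_conjTranspose_mul_mul_le hkn (Bᴴ * W)
    rw [hquad, hgram, det_mul, hdetD] at h
    exact_mod_cast h
  have ha0 : 0 ≤ a := (posSemidef_self_mul_conjTranspose B).topEigProd_nonneg hkm
  rcases ha0.eq_or_lt with ha | ha
  · rw [← ha]
    exact (posSemidef_conjTranspose_mul_self B).topEigProd_nonneg hkn
  · exact le_of_mul_le_mul_right key ha

theorem Matrix.PosSemidef.topEigProd_mul_mul_conjTranspose_le {M : Matrix (Fin n) (Fin n) ℂ}
    (hM : M.PosSemidef) (B : Matrix (Fin m) (Fin n) ℂ) (hkm : k ≤ m) (hkn : k ≤ n) :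
    topEigProd (hM.mul_mul_conjTranspose_same B).isHermitian k hkm ≤
      topEigProd hM.isHermitian k hkn *
        topEigProd (posSemidef_conjTranspose_mul_self B).isHermitian k hkn := by
  obtain ⟨W, hWW, hdet⟩ :=
    (hM.mul_mul_conjTranspose_same B).isHermitian.exists_isometry_det_eq_topEigProd hkm
  have hBB := (posSemidef_self_mul_conjTranspose B).det_conjTranspose_mul_mul_le hkm W
  rw [hWW, det_one, mul_one] at hBB
  have hM0 : (0 : ℂ) ≤ topEigProd hM.isHermitian k hkn := by
    exact_mod_cast hM.topEigProd_nonneg hkn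
  have hcomplex : (topEigProd (hM.mul_mul_conjTranspose_same B).isHermitian k hkm : ℂ) ≤
      topEigProd hM.isHermitian k hkn *
        topEigProd (posSemidef_self_mul_conjTranspose B).isHermitian k hkm :=
    calc _ = det ((Bᴴ * W)ᴴ * M * (Bᴴ * W)) := by
          rw [← hdet]
          simp only [conjTranspose_mul, conjTranspose_conjTranspose, Matrix.mul_assoc]
      _ ≤ topEigProd hM.isHermitian k hkn * det ((Bᴴ * W)ᴴ * (Bᴴ * W)) :=
          hM.det_conjTranspose_mul_mul_le hkn _
      _ = topEigProd hM.isHermitian k hkn * det (Wᴴ * (B * Bᴴ) * W) := by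
          simp only [conjTranspose_mul, conjTranspose_conjTranspose, Matrix.mul_assoc]
      _ ≤ _ := mul_le_mul_of_nonneg_left hBB hM0
  norm_cast at hcomplex
  exact hcomplex.trans (mul_le_mul_of_nonneg_left (topEigProd_self_mul_conjTranspose_le B hkm hkn)
    (hM.topEigProd_nonneg hkn))

end Submultiplicativity

theorem prod_eigenvalues_channel_le_general (Nu Nb L P : ℕ)
    (Au : Matrix (Fin Nu) (Fin L) ℂ) (X : Matrix (Fin L) (Fin P) ℂ)
    (Ab : Matrix (Fin Nb) (Fin P) ℂ) (t : Fin L → ℂ) (g : Fin P → ℂ)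
    (Q : Matrix (Fin Nb) (Fin Nb) ℂ) (hQ : Q.PosSemidef)
    (k : ℕ) (hk : k ≤ min Nu (min L P)) :
    ∏ i : Fin k,
        eigDesc (hQ.mul_mul_conjTranspose_same
            (Au * Matrix.diagonal t * X * Matrix.diagonal g * Abᴴ)).isHermitian
          (Fin.castLE (hk.trans (min_le_left _ _)) i)
      ≤ ∏ i : Fin k,
          eigDesc (Matrix.posSemidef_conjTranspose_mul_self Au).isHermitian
              (Fin.castLE (hk.trans ((min_le_right _ _).trans (min_le_left _ _))) i) *
          eigDesc (hQ.conjTranspose_mul_mul_same Ab).isHermitian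
              (Fin.castLE (hk.trans ((min_le_right _ _).trans (min_le_right _ _))) i) *
          eigDesc (Matrix.posSemidef_conjTranspose_mul_self X).isHermitian
              (Fin.castLE (hk.trans ((min_le_right _ _).trans (min_le_right _ _))) i) *
          eigDesc (Matrix.posSemidef_conjTranspose_mul_self (Matrix.diagonal g)).isHermitian
              (Fin.castLE (hk.trans ((min_le_right _ _).trans (min_le_right _ _))) i) *
          eigDesc (Matrix.posSemidef_conjTranspose_mul_self (Matrix.diagonal t)).isHermitian
              (Fin.castLE (hk.trans ((min_le_right _ _).trans (min_le_left _ _))) i) := by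
  have hkNu : k ≤ Nu := hk.trans (min_le_left _ _)
  have hkL : k ≤ L := hk.trans ((min_le_right _ _).trans (min_le_left _ _))
  have hkP : k ≤ P := hk.trans ((min_le_right _ _).trans (min_le_right _ _))
  have hM₄ := hQ.conjTranspose_mul_mul_same Ab
  have hM₃ := hM₄.mul_mul_conjTranspose_same (diagonal g)
  have hM₂ := hM₃.mul_mul_conjTranspose_same X
  have hM₁ := hM₂.mul_mul_conjTranspose_same (diagonal t)
  have hchannel : Au * diagonal t * X * diagonal g * Abᴴ * Q *
      (Au * diagonal t * X * diagonal g * Abᴴ)ᴴ =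
        Au * (diagonal t * (X * (diagonal g * (Abᴴ * Q * Ab) * (diagonal g)ᴴ) * Xᴴ) *
          (diagonal t)ᴴ) * Auᴴ := by
    simp only [conjTranspose_mul, conjTranspose_conjTranspose, Matrix.mul_assoc]
  simp only [Finset.prod_mul_distrib]
  change topEigProd _ k hkNu ≤ topEigProd _ k hkL * topEigProd hM₄.isHermitian k hkP *
    topEigProd _ k hkP * topEigProd _ k hkP * topEigProd _ k hkL
  have hAu := (posSemidef_conjTranspose_mul_self Au).topEigProd_nonneg hkL
  have hT := (posSemidef_conjTranspose_mul_self (diagonal t)).topEigProd_nonneg hkL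
  have hX := (posSemidef_conjTranspose_mul_self X).topEigProd_nonneg hkP
  calc _ = topEigProd (hM₁.mul_mul_conjTranspose_same Au).isHermitian k hkNu :=
        topEigProd_congr hchannel _ _ hkNu
    _ ≤ _ := hM₁.topEigProd_mul_mul_conjTranspose_le Au hkNu hkL
    _ ≤ _ := mul_le_mul_of_nonneg_right
        (hM₂.topEigProd_mul_mul_conjTranspose_le (diagonal t) hkL hkL) hAu
    _ ≤ _ := mul_le_mul_of_nonneg_right (mul_le_mul_of_nonneg_right
        (hM₃.topEigProd_mul_mul_conjTranspose_le X hkL hkP) hT) hAu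
    _ ≤ _ := mul_le_mul_of_nonneg_right (mul_le_mul_of_nonneg_right (mul_le_mul_of_nonneg_right
        (hM₄.topEigProd_mul_mul_conjTranspose_le (diagonal g) hkP hkP) hX) hT) hAu
    _ = _ := by ring

/-- **Log-majorization eigenvalue chain of Theorem 1 of the paper (Appendix A).**
With `H = A_u T X G A_bᴴ`, `T = diag t`, `G = diag g` and `Q ⪰ 0`, for every
`1 ≤ k ≤ min(N_u, L, P)`,
`∏_{i=1}^k λᵢ(H Q Hᴴ) ≤ ∏_{i=1}^k λᵢ(A_uᴴA_u) λᵢ(A_bᴴQA_b) λᵢ(XᴴX) λᵢ(GᴴG) λᵢ(TᴴT)`. -/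
theorem prod_eigenvalues_channel_le (Nu Nb L P : ℕ)
    (hNu : 0 < Nu) (hNb : 0 < Nb) (hL : 0 < L) (hP : 0 < P)
    (Au : Matrix (Fin Nu) (Fin L) ℂ) (X : Matrix (Fin L) (Fin P) ℂ)
    (Ab : Matrix (Fin Nb) (Fin P) ℂ) (t : Fin L → ℂ) (g : Fin P → ℂ)
    (Q : Matrix (Fin Nb) (Fin Nb) ℂ) (hQ : Q.PosSemidef)
    (k : ℕ) (hk1 : 1 ≤ k) (hk : k ≤ min Nu (min L P)) :
    ∏ i : Fin k,
        eigDesc (hQ.mul_mul_conjTranspose_same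
            (Au * Matrix.diagonal t * X * Matrix.diagonal g * Abᴴ)).isHermitian
          (Fin.castLE (hk.trans (min_le_left _ _)) i)
      ≤ ∏ i : Fin k,
          eigDesc (Matrix.posSemidef_conjTranspose_mul_self Au).isHermitian
              (Fin.castLE (hk.trans ((min_le_right _ _).trans (min_le_left _ _))) i) *
          eigDesc (hQ.conjTranspose_mul_mul_same Ab).isHermitian
              (Fin.castLE (hk.trans ((min_le_right _ _).trans (min_le_right _ _))) i) *
          eigDesc (Matrix.posSemidef_conjTranspose_mul_self X).isHermitian
              (Fin.castLE (hk.trans ((min_le_right _ _).trans (min_le_right _ _))) i) *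
          eigDesc (Matrix.posSemidef_conjTranspose_mul_self (Matrix.diagonal g)).isHermitian
              (Fin.castLE (hk.trans ((min_le_right _ _).trans (min_le_right _ _))) i) *
          eigDesc (Matrix.posSemidef_conjTranspose_mul_self (Matrix.diagonal t)).isHermitian
              (Fin.castLE (hk.trans ((min_le_right _ _).trans (min_le_left _ _))) i) :=
  prod_eigenvalues_channel_le_general Nu Nb L P Au X Ab t g Q hQ k hk
end
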